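/- Under the ordinary substitutes condition for the opponent, a constant bidding strategy is optimal: for all k ∈ M and p ∈ G, W(k,p) = Ṽ(k,p), where W is the dynamic-programming value over all eligibility-respecting strategies and Ṽ is the value restricted to strategies that are constant from round 1 onwards. -/

import Mathlib

open Finset Set

/-- Bundles of items: component `j` ranges over `{0, …, m j}`. -/
abbrev Bundle {M : ℕ} (m : Fin M → ℕ) := ∀ j, Fin (m j + 1)

/-- Quasi-linear payoff `v(δ) − ⟨δ, p⟩`. -/
def payoff {M : ℕ} {m : Fin M → ℕ} (v : Bundle m → ℝ) (δ : Bundle m) (p : Fin M → ℝ) : ℝ :=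
  v δ - ∑ j, (δ j : ℝ) * p j

/-- The indifference locus: prices where the demand set is not a singleton. -/
def indiff {M : ℕ} {m : Fin M → ℕ} (v : Bundle m → ℝ) : Set (Fin M → ℝ) :=
  {p | ∃ δ δ' : Bundle m, δ ≠ δ' ∧ (∀ d, payoff v d p ≤ payoff v δ p) ∧
    (∀ d, payoff v d p ≤ payoff v δ' p)}

/-- The SCA price update. -/
def Tup {M : ℕ} {m : Fin M → ℕ} (D : (Fin M → ℝ) → Bundle m) (ε : Fin M → ℝ)
    (k : Bundle m) (p : Fin M → ℝ) : Fin M → ℝ :=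
  fun j => p j + (if m j < (k j : ℕ) + (D p j : ℕ) then ε j else 0)

/-- Bundles eligible after bidding `k`: those with no larger ℓ¹-norm. -/
def elig {M : ℕ} (m : Fin M → ℕ) (k : Bundle m) : Finset (Bundle m) :=
  Finset.univ.filter (fun l : Bundle m => ∑ j, (l j : ℕ) ≤ ∑ j, (k j : ℕ))

theorem elig_nonempty {M : ℕ} (m : Fin M → ℕ) (k : Bundle m) : (elig m k).Nonempty :=
  ⟨k, Finset.mem_filter.mpr ⟨Finset.mem_univ _, le_rfl⟩⟩

/-!
Every price coordinate only rises, and only while someone demands the item at that price, so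
prices stay below the largest valuation and the auction terminates; all values can therefore be
computed by well-founded induction along the auction's rounds. The substitutes condition says
that raising the other prices does not lower the opponent's demand for item `j`. Hence a constant
bid `l` started at `p` never pushes a price beyond a grid price `q ≥ p` at which `l` already ends
the auction, so the constant-bid value `V l` is antitone in the starting price. Consequently,
after the first round, switching to a constant bid `l'` at once is at least as good as first
bidding a constant `l` and then switching to `l'`, which makes `Ṽ` satisfy the same recursion as
`W`.
-/

variable {M : ℕ} {m : Fin M → ℕ}

/-- Bidding `k` at prices `p` ends the auction. -/
def NoExcessDemand (D : (Fin M → ℝ) → Bundle m) (k : Bundle m) (p : Fin M → ℝ) : Prop :=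
  ∀ j, (k j : ℕ) + (D p j : ℕ) ≤ m j

def priceGrid (pmin ε : Fin M → ℝ) : Set (Fin M → ℝ) :=
  {p | ∀ j, ∃ n : ℕ, p j = pmin j + n * ε j}

/-- `q` is the price after one round of the auction from a price `p ∈ G` that does not end it. -/
def AuctionStep (G : Set (Fin M → ℝ)) (D : (Fin M → ℝ) → Bundle m) (ε : Fin M → ℝ)
    (q p : Fin M → ℝ) : Prop :=
  p ∈ G ∧ ∃ k, ¬ NoExcessDemand D k p ∧ q = Tup D ε k p

lemma mem_elig {k l : Bundle m} : l ∈ elig m k ↔ ∑ j, (l j : ℕ) ≤ ∑ j, (k j : ℕ) := by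
  simp [elig]

lemma self_mem_elig (k : Bundle m) : k ∈ elig m k := mem_elig.2 le_rfl

lemma elig_subset_of_mem {k l : Bundle m} (hl : l ∈ elig m k) : elig m l ⊆ elig m k :=
  fun _ h => mem_elig.2 ((mem_elig.1 h).trans (mem_elig.1 hl))

section Tup

variable {D : (Fin M → ℝ) → Bundle m} {ε : Fin M → ℝ} {k : Bundle m} {p : Fin M → ℝ}

lemma Tup_apply_of_lt {j : Fin M} (h : m j < (k j : ℕ) + (D p j : ℕ)) :
    Tup D ε k p j = p j + ε j :=
  congrArg (p j + ·) (if_pos h)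

lemma Tup_apply_of_not_lt {j : Fin M} (h : ¬ m j < (k j : ℕ) + (D p j : ℕ)) :
    Tup D ε k p j = p j := by
  simp [Tup, h]

lemma le_Tup (hε : 0 ≤ ε) : p ≤ Tup D ε k p := by
  intro j
  by_cases h : m j < (k j : ℕ) + (D p j : ℕ)
  · simpa [Tup_apply_of_lt h] using hε j
  · rw [Tup_apply_of_not_lt h]

end Tup

section PriceGrid

variable {pmin ε p q : Fin M → ℝ}

lemma nonneg_of_mem_priceGrid (hpmin : 0 ≤ pmin) (hε : 0 ≤ ε) (hp : p ∈ priceGrid pmin ε) :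
    0 ≤ p := by
  intro j
  obtain ⟨n, hn⟩ := hp j
  rw [hn]
  exact add_nonneg (hpmin j) (mul_nonneg n.cast_nonneg (hε j))

lemma Tup_mem_priceGrid (D : (Fin M → ℝ) → Bundle m) (k : Bundle m)
    (hp : p ∈ priceGrid pmin ε) : Tup D ε k p ∈ priceGrid pmin ε := by
  intro j
  obtain ⟨n, hn⟩ := hp j
  by_cases h : m j < (k j : ℕ) + (D p j : ℕ)
  · exact ⟨n + 1, by rw [Tup_apply_of_lt h, hn]; push_cast; ring⟩
  · exact ⟨n, by rw [Tup_apply_of_not_lt h, hn]⟩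

lemma add_le_of_lt_of_mem_priceGrid {j : Fin M} (hε : 0 < ε j) (hp : p ∈ priceGrid pmin ε)
    (hq : q ∈ priceGrid pmin ε) (hpq : p j < q j) : p j + ε j ≤ q j := by
  obtain ⟨a, ha⟩ := hp j
  obtain ⟨b, hb⟩ := hq j
  have hab : a < b := by
    have : (a : ℝ) * ε j < b * ε j := by linarith
    exact_mod_cast lt_of_mul_lt_mul_right this hε.le
  have : ((a + 1 : ℕ) : ℝ) * ε j ≤ b * ε j := by gcongr; exact hab
  push_cast at this
  linarith

end PriceGrid

section Termination

lemma le_of_payoff_nonneg {v : Bundle m → ℝ} {B : ℝ} (hB : ∀ δ, v δ ≤ B) {δ : Bundle m}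
    {p : Fin M → ℝ} (hp : 0 ≤ p) (hδ : 0 ≤ payoff v δ p) {j : Fin M} (hj : 1 ≤ (δ j : ℕ)) :
    p j ≤ B :=
  calc p j ≤ (δ j : ℝ) * p j := le_mul_of_one_le_left (hp j) (by exact_mod_cast hj)
    _ ≤ ∑ i, (δ i : ℝ) * p i :=
        single_le_sum (f := fun i => (δ i : ℝ) * p i)
          (fun i _ => mul_nonneg (Nat.cast_nonneg _) (hp i)) (mem_univ j)
    _ ≤ v δ := by rw [payoff] at hδ; linarith
    _ ≤ B := hB δ

/-- Bounds the number of `ε`-steps each coordinate of `p` can still rise while staying `≤ B`. -/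
noncomputable def stepMeasure (B : ℝ) (ε p : Fin M → ℝ) : ℕ :=
  ∑ j, (⌈(B - p j) / ε j⌉ + 1).toNat

lemma toNat_ceil_add_one_lt {B e x : ℝ} (he : 0 < e) (hx : x ≤ B) :
    (⌈(B - (x + e)) / e⌉ + 1).toNat < (⌈(B - x) / e⌉ + 1).toNat := by
  have hsub : (B - (x + e)) / e = (B - x) / e - 1 := by field_simp; ring
  have hnonneg : 0 ≤ ⌈(B - x) / e⌉ := Int.ceil_nonneg (div_nonneg (by linarith) he.le)
  rw [hsub, Int.ceil_sub_one]
  omega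

lemma stepMeasure_Tup_lt {D : (Fin M → ℝ) → Bundle m} {ε p : Fin M → ℝ} {k : Bundle m} {B : ℝ}
    (hε : ∀ j, 0 < ε j) (hB : ∀ j, m j < (k j : ℕ) + (D p j : ℕ) → p j ≤ B)
    (hk : ¬ NoExcessDemand D k p) : stepMeasure B ε (Tup D ε k p) < stepMeasure B ε p := by
  have hlt : ∀ j, m j < (k j : ℕ) + (D p j : ℕ) →
      (⌈(B - Tup D ε k p j) / ε j⌉ + 1).toNat < (⌈(B - p j) / ε j⌉ + 1).toNat := fun j hj => by
    rw [Tup_apply_of_lt hj]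
    exact toNat_ceil_add_one_lt (hε j) (hB j hj)
  obtain ⟨j, hj⟩ : ∃ j, m j < (k j : ℕ) + (D p j : ℕ) := by
    simpa [NoExcessDemand] using hk
  refine sum_lt_sum (fun i _ => ?_) ⟨j, mem_univ j, hlt j hj⟩
  by_cases hi : m i < (k i : ℕ) + (D p i : ℕ)
  · exact (hlt i hi).le
  · rw [Tup_apply_of_not_lt hi]

/-- An item whose price rises is demanded by the opponent, and individually rational demand
keeps such prices below every upper bound of the valuation. -/
theorem wellFounded_auctionStep {v : Bundle m → ℝ} {D : (Fin M → ℝ) → Bundle m}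
    {pmin ε : Fin M → ℝ} (hpmin : 0 ≤ pmin) (hε : ∀ j, 0 < ε j)
    (hD : ∀ p ∈ priceGrid pmin ε, 0 ≤ payoff v (D p) p) :
    WellFounded (AuctionStep (priceGrid pmin ε) D ε) := by
  obtain ⟨B, hB⟩ := Finite.exists_le v
  refine Subrelation.wf ?_ (measure (stepMeasure B ε)).wf
  rintro q p ⟨hp, k, hk, rfl⟩
  refine stepMeasure_Tup_lt hε (fun j hj => le_of_payoff_nonneg hB
    (nonneg_of_mem_priceGrid hpmin (fun i => (hε i).le) hp) (hD p hp) ?_) hk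
  have := (k j).isLt
  omega

end Termination

section ConstantBid

variable {G : Set (Fin M → ℝ)} {D : (Fin M → ℝ) → Bundle m} {ε : Fin M → ℝ}
  {w : Bundle m → ℝ} {V : Bundle m → (Fin M → ℝ) → ℝ}

/-- The substitutes condition keeps the demand for `j` from falling while `p j` stays put, so a
price below `q` that rises is below `q`, and then at least one grid step below. -/
lemma Tup_le_of_noExcessDemand (hε : ∀ j, 0 < ε j) {pmin p q : Fin M → ℝ}
    (hDmono : ∀ p ∈ priceGrid pmin ε, ∀ q ∈ priceGrid pmin ε, p ≤ q → ∀ j, p j = q j →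
      (D p j : ℕ) ≤ (D q j : ℕ))
    (hp : p ∈ priceGrid pmin ε) (hq : q ∈ priceGrid pmin ε) (hpq : p ≤ q) {l : Bundle m}
    (hl : NoExcessDemand D l q) : Tup D ε l p ≤ q := by
  intro j
  by_cases hj : m j < (l j : ℕ) + (D p j : ℕ)
  · have hne : p j ≠ q j := fun heq => by
      have := hDmono p hp q hq hpq j heq
      have := hl j
      omega
    rw [Tup_apply_of_lt hj]
    exact add_le_of_lt_of_mem_priceGrid (hε j) hp hq (lt_of_le_of_ne (hpq j) hne)
  · rw [Tup_apply_of_not_lt hj]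
    exact hpq j

lemma exists_noExcessDemand_of_constantBid (hwf : WellFounded (AuctionStep G D ε))
    (hG : ∀ p ∈ G, ∀ k, Tup D ε k p ∈ G) (hε : 0 ≤ ε)
    (hVterm : ∀ k p, NoExcessDemand D k p → V k p = w k - ∑ j, (k j : ℝ) * p j)
    (hVstep : ∀ k p, ¬ NoExcessDemand D k p → V k p = V k (Tup D ε k p)) (l : Bundle m)
    {p : Fin M → ℝ} (hp : p ∈ G) :
    ∃ q ∈ G, p ≤ q ∧ NoExcessDemand D l q ∧ V l p = w l - ∑ j, (l j : ℝ) * q j := by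
  induction p using hwf.induction with
  | _ p ih =>
    by_cases hl : NoExcessDemand D l p
    · exact ⟨p, hp, le_rfl, hl, hVterm l p hl⟩
    · obtain ⟨q, hq, hTq, hlq, hVq⟩ := ih _ ⟨hp, l, hl, rfl⟩ (hG p hp l)
      exact ⟨q, hq, (le_Tup hε).trans hTq, hlq, (hVstep l p hl).trans hVq⟩

lemma le_constantBid_of_noExcessDemand (hwf : WellFounded (AuctionStep G D ε))
    (hG : ∀ p ∈ G, ∀ k, Tup D ε k p ∈ G)
    (hVterm : ∀ k p, NoExcessDemand D k p → V k p = w k - ∑ j, (k j : ℝ) * p j)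
    (hVstep : ∀ k p, ¬ NoExcessDemand D k p → V k p = V k (Tup D ε k p)) {l : Bundle m}
    {q : Fin M → ℝ} (hTq : ∀ p ∈ G, p ≤ q → Tup D ε l p ≤ q)
    {p : Fin M → ℝ} (hp : p ∈ G) (hpq : p ≤ q) :
    w l - ∑ j, (l j : ℝ) * q j ≤ V l p := by
  induction p using hwf.induction with
  | _ p ih =>
    by_cases hlp : NoExcessDemand D l p
    · rw [hVterm l p hlp]
      gcongr with j
      exact hpq j
    · rw [hVstep l p hlp]
      exact ih _ ⟨hp, l, hlp, rfl⟩ (hG p hp l) (hTq p hp hpq)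

lemma constantBid_le_of_le (hwf : WellFounded (AuctionStep G D ε))
    (hG : ∀ p ∈ G, ∀ k, Tup D ε k p ∈ G) (hε : 0 ≤ ε)
    (hVterm : ∀ k p, NoExcessDemand D k p → V k p = w k - ∑ j, (k j : ℝ) * p j)
    (hVstep : ∀ k p, ¬ NoExcessDemand D k p → V k p = V k (Tup D ε k p))
    (hTle : ∀ l, ∀ p ∈ G, ∀ q ∈ G, p ≤ q → NoExcessDemand D l q → Tup D ε l p ≤ q)
    (l : Bundle m) {p p' : Fin M → ℝ} (hp : p ∈ G) (hp' : p' ∈ G) (hpp' : p ≤ p') :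
    V l p' ≤ V l p := by
  obtain ⟨q, hq, hp'q, hlq, hVq⟩ :=
    exists_noExcessDemand_of_constantBid hwf hG hε hVterm hVstep l hp'
  rw [hVq]
  exact le_constantBid_of_noExcessDemand hwf hG hVterm hVstep
    (fun p hp hpq => hTle l p hp q hq hpq hlq) hp (hpp'.trans hp'q)

end ConstantBid

section DynamicProgramming

variable {G : Set (Fin M → ℝ)} {D : (Fin M → ℝ) → Bundle m} {ε : Fin M → ℝ}
  {w : Bundle m → ℝ} {V Vt : Bundle m → (Fin M → ℝ) → ℝ}

lemma le_sup'_Vt (hVterm : ∀ k p, NoExcessDemand D k p → V k p = w k - ∑ j, (k j : ℝ) * p j)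
    (hVstep : ∀ k p, ¬ NoExcessDemand D k p → V k p = V k (Tup D ε k p))
    (hVtterm : ∀ k p, NoExcessDemand D k p → Vt k p = w k - ∑ j, (k j : ℝ) * p j)
    (hVtstep : ∀ k p, ¬ NoExcessDemand D k p →
      Vt k p = (elig m k).sup' (elig_nonempty m k) (fun l => V l (Tup D ε k p)))
    (k : Bundle m) (p : Fin M → ℝ) : V k p ≤ Vt k p := by
  by_cases hk : NoExcessDemand D k p
  · rw [hVterm k p hk, hVtterm k p hk]
  · rw [hVstep k p hk, hVtstep k p hk]
    exact le_sup' (fun l => V l (Tup D ε k p)) (self_mem_elig k)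

/-- Delaying the switch to a constant bid by one round can only raise the prices it faces. -/
lemma Vt_le_sup'_V (hVanti : ∀ l, ∀ p ∈ G, ∀ p' ∈ G, p ≤ p' → V l p' ≤ V l p)
    (hG : ∀ p ∈ G, ∀ k, Tup D ε k p ∈ G) (hε : 0 ≤ ε)
    (hVterm : ∀ k p, NoExcessDemand D k p → V k p = w k - ∑ j, (k j : ℝ) * p j)
    (hVtterm : ∀ k p, NoExcessDemand D k p → Vt k p = w k - ∑ j, (k j : ℝ) * p j)
    (hVtstep : ∀ k p, ¬ NoExcessDemand D k p →
      Vt k p = (elig m k).sup' (elig_nonempty m k) (fun l => V l (Tup D ε k p)))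
    {k l : Bundle m} (hl : l ∈ elig m k) {p : Fin M → ℝ} (hp : p ∈ G) :
    Vt l p ≤ (elig m k).sup' (elig_nonempty m k) (fun l' => V l' p) := by
  by_cases hlp : NoExcessDemand D l p
  · rw [hVtterm l p hlp, ← hVterm l p hlp]
    exact le_sup' (fun l' => V l' p) hl
  · rw [hVtstep l p hlp]
    refine sup'_le _ _ fun l' hl' => ?_
    exact le_sup'_of_le _ (elig_subset_of_mem hl hl')
      (hVanti l' p hp _ (hG p hp l) (le_Tup hε))

theorem W_eq_Vt {W : Bundle m → (Fin M → ℝ) → ℝ} (hwf : WellFounded (AuctionStep G D ε))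
    (hG : ∀ p ∈ G, ∀ k, Tup D ε k p ∈ G) (hε : 0 ≤ ε)
    (hVanti : ∀ l, ∀ p ∈ G, ∀ p' ∈ G, p ≤ p' → V l p' ≤ V l p)
    (hVterm : ∀ k p, NoExcessDemand D k p → V k p = w k - ∑ j, (k j : ℝ) * p j)
    (hVstep : ∀ k p, ¬ NoExcessDemand D k p → V k p = V k (Tup D ε k p))
    (hWterm : ∀ k p, NoExcessDemand D k p → W k p = w k - ∑ j, (k j : ℝ) * p j)
    (hWstep : ∀ k p, ¬ NoExcessDemand D k p →
      W k p = (elig m k).sup' (elig_nonempty m k) (fun l => W l (Tup D ε k p)))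
    (hVtterm : ∀ k p, NoExcessDemand D k p → Vt k p = w k - ∑ j, (k j : ℝ) * p j)
    (hVtstep : ∀ k p, ¬ NoExcessDemand D k p →
      Vt k p = (elig m k).sup' (elig_nonempty m k) (fun l => V l (Tup D ε k p)))
    {p : Fin M → ℝ} (hp : p ∈ G) (k : Bundle m) : W k p = Vt k p := by
  induction p using hwf.induction generalizing k with
  | _ p ih =>
    by_cases hk : NoExcessDemand D k p
    · rw [hWterm k p hk, hVtterm k p hk]
    · have hq := hG p hp k
      rw [hWstep k p hk, hVtstep k p hk,
        sup'_congr (elig_nonempty m k) rfl fun l _ => ih _ ⟨hp, k, hk, rfl⟩ hq l]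
      exact le_antisymm
        (sup'_le _ _ fun l hl =>
          Vt_le_sup'_V hVanti hG hε hVterm hVtterm hVtstep hl hq)
        (sup'_le _ _ fun l hl =>
          le_sup'_of_le _ hl (le_sup'_Vt hVterm hVstep hVtterm hVtstep l _))

end DynamicProgramming

theorem stmt5_general {M : ℕ} (m : Fin M → ℕ)
    (v : Bundle m → ℝ)
    (hv0 : v (fun _ => 0) = 0)
    (pmin : Fin M → ℝ) (hpmin : ∀ j, 0 ≤ pmin j)
    (ε : Fin M → ℝ) (hε : ∀ j, 0 < ε j)
    (G : Set (Fin M → ℝ))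
    (hG : G = {p | ∀ j, ∃ n : ℕ, p j = pmin j + n * ε j})
    (hGT : ∀ p ∈ G, p ∉ indiff v)
    (D : (Fin M → ℝ) → Bundle m)
    (hD : ∀ p ∈ G, ∀ d, d ≠ D p → payoff v d p < payoff v (D p) p)
    (hsub : ∀ (j : Fin M) (p phat : Fin M → ℝ),
      (∀ i, 0 ≤ p i) → (∀ i, 0 ≤ phat i) →
      p ∉ indiff v → phat ∉ indiff v →
      (∀ i, i ≠ j → p i ≤ phat i) → phat j = p j →
      (D p j : ℕ) ≤ (D phat j : ℕ))
    (w : Bundle m → ℝ)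
    (V W Vt : Bundle m → (Fin M → ℝ) → ℝ)
    -- the constant-bid value V
    (hVterm : ∀ k p, (∀ j, (k j : ℕ) + (D p j : ℕ) ≤ m j) →
      V k p = w k - ∑ j, (k j : ℝ) * p j)
    (hVstep : ∀ k p, ¬ (∀ j, (k j : ℕ) + (D p j : ℕ) ≤ m j) →
      V k p = V k (Tup D ε k p))
    -- the dynamic-programming value W
    (hWterm : ∀ k p, (∀ j, (k j : ℕ) + (D p j : ℕ) ≤ m j) →
      W k p = w k - ∑ j, (k j : ℝ) * p j)
    (hWstep : ∀ k p, ¬ (∀ j, (k j : ℕ) + (D p j : ℕ) ≤ m j) →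
      W k p = (elig m k).sup' (elig_nonempty m k) (fun l => W l (Tup D ε k p)))
    -- the value Ṽ of strategies constant from round 1 on
    (hVtterm : ∀ k p, (∀ j, (k j : ℕ) + (D p j : ℕ) ≤ m j) →
      Vt k p = w k - ∑ j, (k j : ℝ) * p j)
    (hVtstep : ∀ k p, ¬ (∀ j, (k j : ℕ) + (D p j : ℕ) ≤ m j) →
      Vt k p = (elig m k).sup' (elig_nonempty m k) (fun l => V l (Tup D ε k p))) :
    ∀ (k : Bundle m), ∀ p ∈ G, W k p = Vt k p := by
  change G = priceGrid pmin ε at hG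
  subst hG
  have hε0 : 0 ≤ ε := fun j => (hε j).le
  have hGnn : ∀ p ∈ priceGrid pmin ε, 0 ≤ p := fun p => nonneg_of_mem_priceGrid hpmin hε0
  have hrational : ∀ p ∈ priceGrid pmin ε, 0 ≤ payoff v (D p) p := fun p hp => by
    by_cases h0 : (fun _ => 0) = D p
    · simp [← h0, payoff, hv0]
    · simpa [payoff, hv0] using (hD p hp _ h0).le
  have hwf := wellFounded_auctionStep hpmin hε hrational
  have hTmem : ∀ p ∈ priceGrid pmin ε, ∀ k, Tup D ε k p ∈ priceGrid pmin ε :=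
    fun _ hp k => Tup_mem_priceGrid D k hp
  have hDmono : ∀ p ∈ priceGrid pmin ε, ∀ q ∈ priceGrid pmin ε, p ≤ q → ∀ j, p j = q j →
      (D p j : ℕ) ≤ (D q j : ℕ) := fun p hp q hq hpq j hj =>
    hsub j p q (hGnn p hp) (hGnn q hq) (hGT p hp) (hGT q hq) (fun i _ => hpq i) hj.symm
  have hVanti : ∀ l, ∀ p ∈ priceGrid pmin ε, ∀ p' ∈ priceGrid pmin ε, p ≤ p' → V l p' ≤ V l p :=
    fun l p hp p' hp' => constantBid_le_of_le hwf hTmem hε0 hVterm hVstep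
      (fun _ _ hp _ hq hpq hlq => Tup_le_of_noExcessDemand hε hDmono hp hq hpq hlq) l hp hp'
  exact fun k p hp => W_eq_Vt hwf hTmem hε0 hVanti hVterm hVstep hWterm hWstep hVtterm hVtstep hp k

/-- under the substitutes condition a constant strategy is optimal,
i.e. the dynamic-programming value `W` equals the value `Ṽ` of strategies that are
constant from round 1 onwards. -/
theorem stmt5 {M : ℕ} (m : Fin M → ℕ) (hm : ∀ j, 0 < m j)
    (v : Bundle m → ℝ)
    (hv0 : v (fun _ => 0) = 0) (hvnn : ∀ δ, 0 ≤ v δ)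
    (hvmono : ∀ δ δ' : Bundle m, (∀ j, (δ j : ℕ) ≤ (δ' j : ℕ)) → v δ ≤ v δ')
    (pmin : Fin M → ℝ) (hpmin : ∀ j, 0 ≤ pmin j)
    (ε : Fin M → ℝ) (hε : ∀ j, 0 < ε j)
    (G : Set (Fin M → ℝ))
    (hG : G = {p | ∀ j, ∃ n : ℕ, p j = pmin j + n * ε j})
    (hGT : ∀ p ∈ G, p ∉ indiff v)
    (D : (Fin M → ℝ) → Bundle m)
    (hD : ∀ p ∈ G, ∀ d, d ≠ D p → payoff v d p < payoff v (D p) p)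
    (hsub : ∀ (j : Fin M) (p phat : Fin M → ℝ),
      (∀ i, 0 ≤ p i) → (∀ i, 0 ≤ phat i) →
      p ∉ indiff v → phat ∉ indiff v →
      (∀ i, i ≠ j → p i ≤ phat i) → phat j = p j →
      (D p j : ℕ) ≤ (D phat j : ℕ))
    (w : Bundle m → ℝ)
    (V W Vt : Bundle m → (Fin M → ℝ) → ℝ)
    -- the constant-bid value V
    (hVterm : ∀ k p, (∀ j, (k j : ℕ) + (D p j : ℕ) ≤ m j) →
      V k p = w k - ∑ j, (k j : ℝ) * p j)
    (hVstep : ∀ k p, ¬ (∀ j, (k j : ℕ) + (D p j : ℕ) ≤ m j) →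
      V k p = V k (Tup D ε k p))
    -- the dynamic-programming value W
    (hWterm : ∀ k p, (∀ j, (k j : ℕ) + (D p j : ℕ) ≤ m j) →
      W k p = w k - ∑ j, (k j : ℝ) * p j)
    (hWstep : ∀ k p, ¬ (∀ j, (k j : ℕ) + (D p j : ℕ) ≤ m j) →
      W k p = (elig m k).sup' (elig_nonempty m k) (fun l => W l (Tup D ε k p)))
    -- the value Ṽ of strategies constant from round 1 on
    (hVtterm : ∀ k p, (∀ j, (k j : ℕ) + (D p j : ℕ) ≤ m j) →
      Vt k p = w k - ∑ j, (k j : ℝ) * p j)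
    (hVtstep : ∀ k p, ¬ (∀ j, (k j : ℕ) + (D p j : ℕ) ≤ m j) →
      Vt k p = (elig m k).sup' (elig_nonempty m k) (fun l => V l (Tup D ε k p))) :
    ∀ (k : Bundle m), ∀ p ∈ G, W k p = Vt k p :=
  stmt5_general m v hv0 pmin hpmin ε hε G hG hGT D hD hsub w V W Vt hVterm hVstep hWterm hWstep
    hVtterm hVtstep
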